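/- The subject subcontracting relation ⊑⁺ on contracts is transitive: if C ⊑⁺ C' and C' ⊑⁺ D, then C ⊑⁺ D, provided the underlying predicate-implication relation ≤ of the environment Γ is transitive. -/
import Mathlib


namespace LambdaCon

/-- First-order constants. -/
inductive Const : Type
  | bool : Bool → Const
  | num  : Nat → Const
deriving DecidableEq

/-- Blame identifiers: source-level blame labels ♭ and blame variables ι. -/
inductive BlameId : Type
  | lbl : Nat → BlameId
  | var : Nat → BlameId
deriving DecidableEq

mutual
  /-- Terms of λCon (with the intermediate and subset-level extensions). -/
  inductive Term : Type
    | const      : Const → Term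
    | var        : String → Term
    | lam        : String → Term → Term
    | app        : Term → Term → Term
    | op         : String → Term → Term → Term
    | ite        : Term → Term → Term → Term
    | assert     : Term → BlameId → Contract → Term          -- M @b C
    | evalAssert : Term → Nat → Term → Term                  -- V @ι (eval M)
    | blame      : Nat → Term                                -- blame^♭
    | posBlame   : Nat → Term                                -- +blame^♭
    | negBlame   : Nat → Term                                -- −blame^♭
    | par        : Term → Term → Term                        -- parallel observation M || N

  /-- Contracts. -/
  inductive Contract : Type
    | flat  : Term → Contract
    | fn    : Contract → Contract → Contract
    | dep   : String → Contract → Contract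
    | inter : Contract → Contract → Contract
    | union : Contract → Contract → Contract
    | top   : Contract
    | bot   : Contract
end

mutual
  def beqT : Term → Term → Bool
    | .const k, .const k' => k == k'
    | .var x, .var y => x == y
    | .lam x M, .lam y N => x == y && beqT M N
    | .app a b, .app c d => beqT a c && beqT b d
    | .op o a b, .op o' c d => o == o' && beqT a c && beqT b d
    | .ite a b c, .ite d e f => beqT a d && beqT b e && beqT c f
    | .assert M b C, .assert N b' D => beqT M N && (b == b') && beqC C D
    | .evalAssert V i M, .evalAssert W j N => beqT V W && (i == j) && beqT M N
    | .blame l, .blame l' => l == l'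
    | .posBlame l, .posBlame l' => l == l'
    | .negBlame l, .negBlame l' => l == l'
    | .par a b, .par c d => beqT a c && beqT b d
    | _, _ => false
  def beqC : Contract → Contract → Bool
    | .flat M, .flat N => beqT M N
    | .fn a b, .fn c d => beqC a c && beqC b d
    | .dep x C, .dep y D => x == y && beqC C D
    | .inter a b, .inter c d => beqC a c && beqC b d
    | .union a b, .union c d => beqC a c && beqC b d
    | .top, .top => true
    | .bot, .bot => true
    | _, _ => false
end

instance : BEq Term := ⟨beqT⟩
instance : BEq Contract := ⟨beqC⟩

mutual
  /-- Capture-permitting substitution M[x ↦ N] on terms. -/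
  def substT : Term → String → Term → Term
    | .const k, _, _ => .const k
    | .var y, x, N => if y = x then N else .var y
    | .lam y M, x, N => if y = x then .lam y M else .lam y (substT M x N)
    | .app M₁ M₂, x, N => .app (substT M₁ x N) (substT M₂ x N)
    | .op o M₁ M₂, x, N => .op o (substT M₁ x N) (substT M₂ x N)
    | .ite L M₁ M₂, x, N => .ite (substT L x N) (substT M₁ x N) (substT M₂ x N)
    | .assert M b C, x, N => .assert (substT M x N) b (substC C x N)
    | .evalAssert V ι M, x, N => .evalAssert (substT V x N) ι (substT M x N)
    | .blame ℓ, _, _ => .blame ℓ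
    | .posBlame ℓ, _, _ => .posBlame ℓ
    | .negBlame ℓ, _, _ => .negBlame ℓ
    | .par M₁ M₂, x, N => .par (substT M₁ x N) (substT M₂ x N)
  /-- Substitution C[x ↦ N] on contracts. -/
  def substC : Contract → String → Term → Contract
    | .flat M, x, N => .flat (substT M x N)
    | .fn C D, x, N => .fn (substC C x N) (substC D x N)
    | .dep y C, x, N => if y = x then .dep y C else .dep y (substC C x N)
    | .inter C D, x, N => .inter (substC C x N) (substC D x N)
    | .union C D, x, N => .union (substC C x N) (substC D x N)
    | .top, _, _ => .top
    | .bot, _, _ => .bot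
end

mutual
  /-- Free variables of a term. -/
  def fvT : Term → List String
    | .const _ => []
    | .var y => [y]
    | .lam y M => (fvT M).filter (· ≠ y)
    | .app M₁ M₂ => fvT M₁ ++ fvT M₂
    | .op _ M₁ M₂ => fvT M₁ ++ fvT M₂
    | .ite L M₁ M₂ => fvT L ++ fvT M₁ ++ fvT M₂
    | .assert M _ C => fvT M ++ fvC C
    | .evalAssert V _ M => fvT V ++ fvT M
    | .blame _ => []
    | .posBlame _ => []
    | .negBlame _ => []
    | .par M₁ M₂ => fvT M₁ ++ fvT M₂
  def fvC : Contract → List String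
    | .flat M => fvT M
    | .fn C D => fvC C ++ fvC D
    | .dep y C => (fvC C).filter (· ≠ y)
    | .inter C D => fvC C ++ fvC D
    | .union C D => fvC C ++ fvC D
    | .top => []
    | .bot => []
end

/-- A term is closed if it has no free variables. -/
def Closed (M : Term) : Prop := fvT M = []

/-- Delayed contracts Q: function, dependent, and intersections thereof. -/
inductive Delayed : Contract → Prop
  | fn    : ∀ C D, Delayed (.fn C D)
  | dep   : ∀ x C, Delayed (.dep x C)
  | inter : ∀ Q R, Delayed Q → Delayed R → Delayed (.inter Q R)

/-- Immediate (flat) contracts I. -/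
inductive Immediate : Contract → Prop
  | flat : ∀ M, Immediate (.flat M)

/-- Values of λCon. -/
inductive IsValue : Term → Prop
  | const  : ∀ k, IsValue (.const k)
  | lam    : ∀ x M, IsValue (.lam x M)
  | assert : ∀ V ι Q, IsValue V → Delayed Q → IsValue (.assert V (.var ι) Q)

/-- Erase all (delayed) contract monitors from a value. -/
def unwrap : Term → Term
  | .assert V _ _ => unwrap V
  | V => V

/-- Convert a value into a truth value (everything but `false` counts as true). -/
def truthOf : Term → Bool
  | .const (.bool b) => b
  | _ => true

end LambdaCon
namespace LambdaCon

/-- Predicate-implication environments Γ: M ≤ N means predicate M implies N. -/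
abbrev PredEnv := Term → Term → Prop

mutual
  /-- Context subcontracting C ⊑⁻ D: C restricts the context more than D. -/
  inductive CtxSub (Γ : PredEnv) : Contract → Contract → Prop
    | refl : ∀ C, CtxSub Γ C C
    | flat : ∀ M N, CtxSub Γ (.flat M) (.flat N)
    | fn : ∀ {CD CR DD DR}, SubjSub Γ CD DD → CtxSub Γ CR DR →
        CtxSub Γ (.fn CD CR) (.fn DD DR)
    | dep : ∀ {C D} x, CtxSub Γ C D → CtxSub Γ (.dep x C) (.dep x D)
    | interL : ∀ {CL CR D}, CtxSub Γ CL D → CtxSub Γ CR D →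
        CtxSub Γ (.inter CL CR) D
    | interR₁ : ∀ {C DL} DR, CtxSub Γ C DL → CtxSub Γ C (.inter DL DR)
    | interR₂ : ∀ {C DR} DL, CtxSub Γ C DR → CtxSub Γ C (.inter DL DR)
    | unionL₁ : ∀ {CL D} CR, CtxSub Γ CL D → CtxSub Γ (.union CL CR) D
    | unionL₂ : ∀ {CR D} CL, CtxSub Γ CR D → CtxSub Γ (.union CL CR) D
    | unionR : ∀ {C DL DR}, CtxSub Γ C DL → CtxSub Γ C DR →
        CtxSub Γ C (.union DL DR)

  /-- Subject subcontracting C ⊑⁺ D: the subject obligations of C are more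
      restrictive than those of D. -/
  inductive SubjSub (Γ : PredEnv) : Contract → Contract → Prop
    | refl : ∀ C, SubjSub Γ C C
    | top : ∀ C, SubjSub Γ C .top
    | bot : ∀ D, SubjSub Γ .bot D
    | flat : ∀ {M N}, Γ M N → SubjSub Γ (.flat M) (.flat N)
    | fn : ∀ {CD CR DD DR}, CtxSub Γ CD DD → SubjSub Γ CR DR →
        SubjSub Γ (.fn CD CR) (.fn DD DR)
    | dep : ∀ {C D} x, SubjSub Γ C D → SubjSub Γ (.dep x C) (.dep x D)
    | interL₁ : ∀ {CL D} CR, SubjSub Γ CL D → SubjSub Γ (.inter CL CR) D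
    | interL₂ : ∀ {CR D} CL, SubjSub Γ CR D → SubjSub Γ (.inter CL CR) D
    | interR : ∀ {C DL DR}, SubjSub Γ C DL → SubjSub Γ C DR →
        SubjSub Γ C (.inter DL DR)
    | unionL : ∀ {CL CR D}, SubjSub Γ CL D → SubjSub Γ CR D →
        SubjSub Γ (.union CL CR) D
    | unionR₁ : ∀ {C DL} DR, SubjSub Γ C DL → SubjSub Γ C (.union DL DR)
    | unionR₂ : ∀ {C DR} DL, SubjSub Γ C DR → SubjSub Γ C (.union DL DR)
end

/-- Naive subcontracting C ⊑* D: covariant for context and subject. -/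
def NaiveSub (Γ : PredEnv) (C D : Contract) : Prop :=
  CtxSub Γ C D ∧ SubjSub Γ C D

/-- Ordinary subcontracting C ⊑ D: contravariant for the context portion and
    covariant for the subject portion. -/
def OrdSub (Γ : PredEnv) (C D : Contract) : Prop :=
  CtxSub Γ D C ∧ SubjSub Γ C D

end LambdaCon

namespace LambdaCon

section TransAux

variable {Γ : PredEnv}

theorem subj_botR : ∀ {C : Contract}, SubjSub Γ C .bot → ∀ D, SubjSub Γ C D
  | _, .refl _, D => .bot D
  | _, .bot _, D => .bot D
  | _, .interL₁ CR h, D => .interL₁ CR (subj_botR h D)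
  | _, .interL₂ CL h, D => .interL₂ CL (subj_botR h D)
  | _, .unionL hL hR, D => .unionL (subj_botR hL D) (subj_botR hR D)

theorem subj_flatR {N L : Term} (hNL : Γ N L)
    (hΓ : ∀ M N L, Γ M N → Γ N L → Γ M L) :
    ∀ {C : Contract}, SubjSub Γ C (.flat N) → SubjSub Γ C (.flat L)
  | _, .refl _ => .flat hNL
  | _, .bot _ => .bot _
  | _, .flat hMN => .flat (hΓ _ _ _ hMN hNL)
  | _, .interL₁ CR h => .interL₁ CR (subj_flatR hNL hΓ h)
  | _, .interL₂ CL h => .interL₂ CL (subj_flatR hNL hΓ h)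
  | _, .unionL hL hR => .unionL (subj_flatR hNL hΓ hL) (subj_flatR hNL hΓ hR)

theorem subj_fnR {BD BR D' : Contract}
    (hfn : ∀ {CD CR}, CtxSub Γ CD BD → SubjSub Γ CR BR →
      SubjSub Γ (.fn CD CR) D') :
    ∀ {C : Contract}, SubjSub Γ C (.fn BD BR) → SubjSub Γ C D'
  | _, .refl _ => hfn (.refl _) (.refl _)
  | _, .bot _ => .bot _
  | _, .fn hD hR => hfn hD hR
  | _, .interL₁ CR h => .interL₁ CR (subj_fnR hfn h)
  | _, .interL₂ CL h => .interL₂ CL (subj_fnR hfn h)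
  | _, .unionL hL hR => .unionL (subj_fnR hfn hL) (subj_fnR hfn hR)

theorem subj_depR {x : String} {B D' : Contract}
    (hdep : ∀ {C'}, SubjSub Γ C' B → SubjSub Γ (.dep x C') D') :
    ∀ {C : Contract}, SubjSub Γ C (.dep x B) → SubjSub Γ C D'
  | _, .refl _ => hdep (.refl _)
  | _, .bot _ => .bot _
  | _, .dep _ h => hdep h
  | _, .interL₁ CR h => .interL₁ CR (subj_depR hdep h)
  | _, .interL₂ CL h => .interL₂ CL (subj_depR hdep h)
  | _, .unionL hL hR => .unionL (subj_depR hdep hL) (subj_depR hdep hR)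

theorem subj_midInter {BL BR D' : Contract}
    (hcomb : ∀ {C'}, SubjSub Γ C' BL → SubjSub Γ C' BR → SubjSub Γ C' D') :
    ∀ {C : Contract}, SubjSub Γ C (.inter BL BR) → SubjSub Γ C D'
  | _, .refl _ => hcomb (.interL₁ _ (.refl _)) (.interL₂ _ (.refl _))
  | _, .bot _ => .bot _
  | _, .interR hA hB => hcomb hA hB
  | _, .interL₁ CR h => .interL₁ CR (subj_midInter hcomb h)
  | _, .interL₂ CL h => .interL₂ CL (subj_midInter hcomb h)
  | _, .unionL hL hR => .unionL (subj_midInter hcomb hL) (subj_midInter hcomb hR)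

theorem subj_midUnion {BL BR D' : Contract}
    (hL : ∀ {C'}, SubjSub Γ C' BL → SubjSub Γ C' D')
    (hR : ∀ {C'}, SubjSub Γ C' BR → SubjSub Γ C' D') :
    ∀ {C : Contract}, SubjSub Γ C (.union BL BR) → SubjSub Γ C D'
  | _, .refl _ => .unionL (hL (.refl _)) (hR (.refl _))
  | _, .bot _ => .bot _
  | _, .unionR₁ _ h => hL h
  | _, .unionR₂ _ h => hR h
  | _, .interL₁ CR h => .interL₁ CR (subj_midUnion hL hR h)
  | _, .interL₂ CL h => .interL₂ CL (subj_midUnion hL hR h)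
  | _, .unionL ha hb => .unionL (subj_midUnion hL hR ha) (subj_midUnion hL hR hb)

theorem ctx_midFlat {M N : Term} :
    ∀ {C : Contract}, CtxSub Γ C (.flat M) → CtxSub Γ C (.flat N)
  | _, .refl _ => .flat _ _
  | _, .flat _ _ => .flat _ _
  | _, .interL hL hR => .interL (ctx_midFlat hL) (ctx_midFlat hR)
  | _, .unionL₁ CR h => .unionL₁ CR (ctx_midFlat h)
  | _, .unionL₂ CL h => .unionL₂ CL (ctx_midFlat h)

theorem ctx_midFn {BD BR D' : Contract}
    (hfn : ∀ {CD CR}, SubjSub Γ CD BD → CtxSub Γ CR BR →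
      CtxSub Γ (.fn CD CR) D') :
    ∀ {C : Contract}, CtxSub Γ C (.fn BD BR) → CtxSub Γ C D'
  | _, .refl _ => hfn (.refl _) (.refl _)
  | _, .fn hD hR => hfn hD hR
  | _, .interL hL hR => .interL (ctx_midFn hfn hL) (ctx_midFn hfn hR)
  | _, .unionL₁ CR h => .unionL₁ CR (ctx_midFn hfn h)
  | _, .unionL₂ CL h => .unionL₂ CL (ctx_midFn hfn h)

theorem ctx_midDep {x : String} {B D' : Contract}
    (hdep : ∀ {C'}, CtxSub Γ C' B → CtxSub Γ (.dep x C') D') :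
    ∀ {C : Contract}, CtxSub Γ C (.dep x B) → CtxSub Γ C D'
  | _, .refl _ => hdep (.refl _)
  | _, .dep _ h => hdep h
  | _, .interL hL hR => .interL (ctx_midDep hdep hL) (ctx_midDep hdep hR)
  | _, .unionL₁ CR h => .unionL₁ CR (ctx_midDep hdep h)
  | _, .unionL₂ CL h => .unionL₂ CL (ctx_midDep hdep h)

theorem ctx_midInter {BL BR D' : Contract}
    (hL : ∀ {C'}, CtxSub Γ C' BL → CtxSub Γ C' D')
    (hR : ∀ {C'}, CtxSub Γ C' BR → CtxSub Γ C' D') :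
    ∀ {C : Contract}, CtxSub Γ C (.inter BL BR) → CtxSub Γ C D'
  | _, .refl _ => .interL (hL (.refl _)) (hR (.refl _))
  | _, .interR₁ _ h => hL h
  | _, .interR₂ _ h => hR h
  | _, .interL ha hb => .interL (ctx_midInter hL hR ha) (ctx_midInter hL hR hb)
  | _, .unionL₁ CR h => .unionL₁ CR (ctx_midInter hL hR h)
  | _, .unionL₂ CL h => .unionL₂ CL (ctx_midInter hL hR h)

theorem ctx_midUnion {BL BR D' : Contract}
    (hcomb : ∀ {C'}, CtxSub Γ C' BL → CtxSub Γ C' BR → CtxSub Γ C' D') :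
    ∀ {C : Contract}, CtxSub Γ C (.union BL BR) → CtxSub Γ C D'
  | _, .refl _ => hcomb (.unionL₁ _ (.refl _)) (.unionL₂ _ (.refl _))
  | _, .unionR hA hB => hcomb hA hB
  | _, .interL ha hb => .interL (ctx_midUnion hcomb ha) (ctx_midUnion hcomb hb)
  | _, .unionL₁ CR h => .unionL₁ CR (ctx_midUnion hcomb h)
  | _, .unionL₂ CL h => .unionL₂ CL (ctx_midUnion hcomb h)

end TransAux

mutual

theorem ctxTrans {Γ : PredEnv} (hΓ : ∀ M N L, Γ M N → Γ N L → Γ M L) :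
    ∀ {A B C : Contract}, CtxSub Γ B C → CtxSub Γ A B → CtxSub Γ A C
  | _, _, _, .refl _, h₁ => h₁
  | _, _, _, .flat _ _, h₁ => ctx_midFlat h₁
  | _, _, _, .fn hD hR, h₁ =>
      ctx_midFn (fun hs hc => .fn (subjTrans hΓ hD hs) (ctxTrans hΓ hR hc)) h₁
  | _, _, _, .dep x h, h₁ =>
      ctx_midDep (fun hs => .dep x (ctxTrans hΓ h hs)) h₁
  | _, _, _, .interL hL hR, h₁ =>
      ctx_midInter (fun h => ctxTrans hΓ hL h) (fun h => ctxTrans hΓ hR h) h₁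
  | _, _, _, .interR₁ DR h, h₁ => .interR₁ DR (ctxTrans hΓ h h₁)
  | _, _, _, .interR₂ DL h, h₁ => .interR₂ DL (ctxTrans hΓ h h₁)
  | _, _, _, .unionL₁ _ h, h₁ =>
      ctx_midUnion (fun hA _ => ctxTrans hΓ h hA) h₁
  | _, _, _, .unionL₂ _ h, h₁ =>
      ctx_midUnion (fun _ hB => ctxTrans hΓ h hB) h₁
  | _, _, _, .unionR ha hb, h₁ => .unionR (ctxTrans hΓ ha h₁) (ctxTrans hΓ hb h₁)

theorem subjTrans {Γ : PredEnv} (hΓ : ∀ M N L, Γ M N → Γ N L → Γ M L) :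
    ∀ {A B C : Contract}, SubjSub Γ B C → SubjSub Γ A B → SubjSub Γ A C
  | _, _, _, .refl _, h₁ => h₁
  | _, _, _, .top _, _ => .top _
  | _, _, _, .bot D, h₁ => subj_botR h₁ D
  | _, _, _, .flat hNL, h₁ => subj_flatR hNL hΓ h₁
  | _, _, _, .fn hD hR, h₁ =>
      subj_fnR (fun hc hs => .fn (ctxTrans hΓ hD hc) (subjTrans hΓ hR hs)) h₁
  | _, _, _, .dep x h, h₁ =>
      subj_depR (fun hs => .dep x (subjTrans hΓ h hs)) h₁
  | _, _, _, .interL₁ _ h, h₁ =>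
      subj_midInter (fun hA _ => subjTrans hΓ h hA) h₁
  | _, _, _, .interL₂ _ h, h₁ =>
      subj_midInter (fun _ hB => subjTrans hΓ h hB) h₁
  | _, _, _, .interR ha hb, h₁ => .interR (subjTrans hΓ ha h₁) (subjTrans hΓ hb h₁)
  | _, _, _, .unionL ha hb, h₁ =>
      subj_midUnion (fun h => subjTrans hΓ ha h) (fun h => subjTrans hΓ hb h) h₁
  | _, _, _, .unionR₁ DR h, h₁ => .unionR₁ DR (subjTrans hΓ h h₁)
  | _, _, _, .unionR₂ DL h, h₁ => .unionR₂ DL (subjTrans hΓ h h₁)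

end

/-- **Transitivity of subject subcontracting**: if C ⊑⁺ C' and C' ⊑⁺ D then
C ⊑⁺ D, provided the predicate-implication relation ≤ of Γ is transitive. -/
theorem subjSub_trans (Γ : PredEnv)
    (hΓ : ∀ M N L, Γ M N → Γ N L → Γ M L)
    {C C' D : Contract} (h₁ : SubjSub Γ C C') (h₂ : SubjSub Γ C' D) :
    SubjSub Γ C D := subjTrans hΓ h₂ h₁

end LambdaCon
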